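/- arXiv:1610.07415 — 5 statements merged into one kernel-verified Lean document; each statement's English description precedes it below -/
import Mathlib

section
/- The variational functional F attains its supremum over [0,∞): the set 𝔑 := { r ≥ 0 : F(r) = sup_{r' ≥ 0} F(r') } of maximizers is nonempty and compact, and in particular sup_{r ≥ 0} F(r) is finite. -/
/-! Since `g_{r,x} ≤ g_{0,x} + γ_s √r` and `cosh (a + b) ≤ cosh a · exp b` for `b ≥ 0`, every
`r`-dependent term of `f` grows at most by the factor `exp (β γ_s √r)`, so
`F(r) ≤ F(0) + γ_s (√r − r) < F(0)` for `r > 1`. Hence all maximizers lie in `[0, 1]`, where the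
continuous `F` attains its maximum, and the set of maximizers is a closed subset of `[0, 1]`. -/

open Real Filter

/-- `g_{r,x} := sqrt((x + λ_s − μ_s)² + γ_s²·r)`. -/
noncomputable def gg (gams lams mus r x : ℝ) : ℝ :=
  Real.sqrt ((x + lams - mus) ^ 2 + gams ^ 2 * r)

/-- The function `f` from Theorem 1 of the paper. Parameters:
`beta` = β, `gams` = γ_s, `lams` = λ_s, `lamf` = λ_f, `lam` = λ,
`mus` = μ_s, `muf` = μ_f, `hs` = h_s, `hf` = h_f, `eta` = η. -/
noncomputable def ff (beta gams lams lamf lam mus muf hs hf eta r : ℝ) : ℝ :=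
  (Real.exp (-(beta * muf)) + Real.exp (-(beta * (4 * lam + 2 * lamf - muf))))
      * Real.cosh (beta * hs)
    + Real.exp (-(beta * (2 * lam - hs))) * Real.cosh (beta * (eta + hf))
    + Real.exp (-(beta * (2 * lam + hs))) * Real.cosh (beta * (eta - hf))
    + Real.exp (-(beta * (lams + muf))) * Real.cosh (beta * gg gams lams mus r 0)
    + Real.exp (-(beta * (4 * lam + lams + 2 * lamf - muf)))
      * Real.cosh (beta * gg gams lams mus r (4 * lam))
    + 2 * Real.exp (-(beta * (2 * lam + lams))) * Real.cosh (beta * hf)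
      * Real.cosh (beta * gg gams lams mus r (2 * lam))

/-- The variational functional `F(r) := −γ_s·r + β⁻¹·ln f(r)`. -/
noncomputable def FF (beta gams lams lamf lam mus muf hs hf eta r : ℝ) : ℝ :=
  -(gams * r) + beta⁻¹ * Real.log (ff beta gams lams lamf lam mus muf hs hf eta r)

theorem Real.cosh_add_le_cosh_mul_exp (x : ℝ) {y : ℝ} (hy : 0 ≤ y) :
    cosh (x + y) ≤ cosh x * exp y := by
  have h : exp (-(x + y)) ≤ exp (-x + y) := exp_le_exp.2 (by linarith)
  rw [cosh_eq, cosh_eq, div_mul_eq_mul_div, add_mul, ← exp_add, ← exp_add]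
  gcongr

theorem gg_nonneg (gams lams mus r x : ℝ) : 0 ≤ gg gams lams mus r x :=
  Real.sqrt_nonneg _

theorem gg_le_gg_zero_add (gams lams mus x : ℝ) {r : ℝ} (hr : 0 ≤ r) :
    gg gams lams mus r x ≤ gg gams lams mus 0 x + |gams| * √r := by
  have h0 : gg gams lams mus 0 x = |x + lams - mus| := by simp [gg, Real.sqrt_sq_eq_abs]
  rw [h0, gg, Real.sqrt_le_iff]
  refine ⟨by positivity, ?_⟩
  nlinarith [sq_abs (x + lams - mus), sq_abs gams, Real.sq_sqrt hr,
    mul_nonneg (mul_nonneg (abs_nonneg (x + lams - mus)) (abs_nonneg gams)) (Real.sqrt_nonneg r)]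

theorem cosh_mul_gg_le {beta : ℝ} (hbeta : 0 ≤ beta) (gams lams mus x : ℝ) {r : ℝ}
    (hr : 0 ≤ r) :
    cosh (beta * gg gams lams mus r x) ≤
      cosh (beta * gg gams lams mus 0 x) * exp (beta * |gams| * √r) := by
  have hr' := gg_nonneg gams lams mus r x
  have h0 := gg_nonneg gams lams mus 0 x
  calc cosh (beta * gg gams lams mus r x)
      ≤ cosh (beta * gg gams lams mus 0 x + beta * |gams| * √r) := by
        rw [cosh_le_cosh, abs_of_nonneg (by positivity), abs_of_nonneg (by positivity),
          mul_assoc, ← mul_add]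
        exact mul_le_mul_of_nonneg_left (gg_le_gg_zero_add gams lams mus x hr) hbeta
    _ ≤ _ := cosh_add_le_cosh_mul_exp _ (by positivity)

theorem ff_le_ff_zero_mul_exp {beta : ℝ} (hbeta : 0 ≤ beta)
    (gams lams lamf lam mus muf hs hf eta : ℝ) {r : ℝ} (hr : 0 ≤ r) :
    ff beta gams lams lamf lam mus muf hs hf eta r ≤
      ff beta gams lams lamf lam mus muf hs hf eta 0 * exp (beta * |gams| * √r) := by
  set E := exp (beta * |gams| * √r)
  have hE : 1 ≤ E := one_le_exp (by positivity)
  have hcosh (c x : ℝ) (hc : 0 ≤ c) :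
      c * cosh (beta * gg gams lams mus r x) ≤ c * cosh (beta * gg gams lams mus 0 x) * E := by
    rw [mul_assoc]
    exact mul_le_mul_of_nonneg_left (cosh_mul_gg_le hbeta gams lams mus x hr) hc
  have hconst (c : ℝ) (hc : 0 ≤ c) : c ≤ c * E := le_mul_of_one_le_right hc hE
  unfold ff
  linarith [hcosh _ 0 (exp_pos (-(beta * (lams + muf)))).le,
    hcosh _ (4 * lam) (exp_pos (-(beta * (4 * lam + lams + 2 * lamf - muf)))).le,
    hcosh (2 * exp (-(beta * (2 * lam + lams))) * cosh (beta * hf)) (2 * lam) (by positivity),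
    hconst ((exp (-(beta * muf)) + exp (-(beta * (4 * lam + 2 * lamf - muf)))) * cosh (beta * hs))
      (by positivity),
    hconst (exp (-(beta * (2 * lam - hs))) * cosh (beta * (eta + hf))) (by positivity),
    hconst (exp (-(beta * (2 * lam + hs))) * cosh (beta * (eta - hf))) (by positivity)]

theorem ff_pos (beta gams lams lamf lam mus muf hs hf eta r : ℝ) :
    0 < ff beta gams lams lamf lam mus muf hs hf eta r := by
  unfold ff
  positivity

theorem continuous_FF (beta gams lams lamf lam mus muf hs hf eta : ℝ) :
    Continuous (FF beta gams lams lamf lam mus muf hs hf eta) := by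
  have hff : Continuous (ff beta gams lams lamf lam mus muf hs hf eta) := by
    unfold ff gg
    fun_prop
  have hlog := hff.log fun r => (ff_pos beta gams lams lamf lam mus muf hs hf eta r).ne'
  unfold FF
  fun_prop

theorem FF_le_FF_zero_add {beta : ℝ} (hbeta : 0 < beta)
    (gams lams lamf lam mus muf hs hf eta : ℝ) {r : ℝ} (hr : 0 ≤ r) :
    FF beta gams lams lamf lam mus muf hs hf eta r ≤
      FF beta gams lams lamf lam mus muf hs hf eta 0 + |gams| * √r - gams * r := by
  have hlog : log (ff beta gams lams lamf lam mus muf hs hf eta r) ≤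
      log (ff beta gams lams lamf lam mus muf hs hf eta 0) + beta * |gams| * √r := by
    rw [← log_exp (beta * |gams| * √r), ← log_mul (ff_pos ..).ne' (exp_pos _).ne']
    exact log_le_log (ff_pos ..)
      (ff_le_ff_zero_mul_exp hbeta.le gams lams lamf lam mus muf hs hf eta hr)
  have hscaled := mul_le_mul_of_nonneg_left hlog (inv_pos.2 hbeta).le
  rw [mul_add, ← mul_assoc, ← mul_assoc, inv_mul_cancel₀ hbeta.ne', one_mul] at hscaled
  simp only [FF]
  linarith

theorem FF_lt_FF_zero {beta gams : ℝ} (hbeta : 0 < beta) (hgams : 0 < gams)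
    (lams lamf lam mus muf hs hf eta : ℝ) {r : ℝ} (hr : 1 < r) :
    FF beta gams lams lamf lam mus muf hs hf eta r <
      FF beta gams lams lamf lam mus muf hs hf eta 0 := by
  have hle := FF_le_FF_zero_add hbeta gams lams lamf lam mus muf hs hf eta (zero_le_one.trans hr.le)
  have hsqrt := mul_lt_mul_of_pos_left (Real.sqrt_lt_self_iff.2 hr) hgams
  rw [abs_of_pos hgams] at hle
  linarith

section Maximizers

variable {α β : Type*} [TopologicalSpace α] [TopologicalSpace β] [LinearOrder β]
  [OrderClosedTopology β] {f : α → β} {s K : Set α} {a : α}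

theorem IsCompact.exists_isMaxOn_of_lt_off (hK : IsCompact K) (ha : a ∈ K)
    (hf : ContinuousOn f K) (htail : ∀ x ∈ s \ K, f x < f a) :
    ∃ x ∈ K, IsMaxOn f s x := by
  obtain ⟨x, hxK, hx⟩ := hK.exists_isMaxOn ⟨a, ha⟩ hf
  refine ⟨x, hxK, fun y hy => ?_⟩
  by_cases hyK : y ∈ K
  · exact hx hyK
  · exact ((htail y ⟨hy, hyK⟩).trans_le (hx ha)).le

theorem IsCompact.isCompact_setOf_isMaxOn_of_lt_off (hK : IsCompact K) (hKs : K ⊆ s)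
    (ha : a ∈ K) (hf : Continuous f) (htail : ∀ x ∈ s \ K, f x < f a) :
    IsCompact {x ∈ s | IsMaxOn f s x} := by
  have hsub : {x ∈ s | IsMaxOn f s x} = K ∩ ⋂ y ∈ s, f ⁻¹' Set.Ici (f y) := by
    ext x
    simp only [Set.mem_ofPred_eq, Set.mem_inter_iff, Set.mem_iInter, Set.mem_preimage,
      Set.mem_Ici, isMaxOn_iff]
    constructor
    · rintro ⟨hxs, hx⟩
      refine ⟨by_contra fun hxK => (htail x ⟨hxs, hxK⟩).not_ge (hx a (hKs ha)), hx⟩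
    · rintro ⟨hxK, hx⟩
      exact ⟨hKs hxK, hx⟩
  rw [hsub]
  exact hK.inter_right (isClosed_biInter fun y _ => isClosed_Ici.preimage hf)

end Maximizers

theorem maximizers_nonempty_compact_general (beta gams lams lamf lam mus muf hs hf eta : ℝ) (hbeta : 0 < beta) (hgams : 0 < gams) :
    {r : ℝ | 0 ≤ r ∧ ∀ r' : ℝ, 0 ≤ r' → FF beta gams lams lamf lam mus muf hs hf eta r' ≤ FF beta gams lams lamf lam mus muf hs hf eta r}.Nonempty ∧
    IsCompact {r : ℝ | 0 ≤ r ∧ ∀ r' : ℝ, 0 ≤ r' → FF beta gams lams lamf lam mus muf hs hf eta r' ≤ FF beta gams lams lamf lam mus muf hs hf eta r} ∧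
    BddAbove ((fun r => FF beta gams lams lamf lam mus muf hs hf eta r) '' Set.Ici 0) := by
  set F := FF beta gams lams lamf lam mus muf hs hf eta
  have hF := continuous_FF beta gams lams lamf lam mus muf hs hf eta
  have htail : ∀ r ∈ Set.Ici 0 \ Set.Icc 0 1, F r < F 0 := fun r hr =>
    FF_lt_FF_zero hbeta hgams lams lamf lam mus muf hs hf eta
      (lt_of_not_ge fun h => hr.2 ⟨hr.1, h⟩)
  have h0 : (0 : ℝ) ∈ Set.Icc 0 1 := ⟨le_rfl, zero_le_one⟩
  obtain ⟨r₀, hr₀, hmax⟩ := isCompact_Icc.exists_isMaxOn_of_lt_off h0 hF.continuousOn htail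
  exact ⟨⟨r₀, hr₀.1, hmax⟩,
    isCompact_Icc.isCompact_setOf_isMaxOn_of_lt_off Set.Icc_subset_Ici_self h0 hF htail,
    hmax.bddAbove⟩

/-- the set of maximizers of `F` over `[0,∞)` is nonempty and
compact, and the supremum is finite (the image of `F` on `[0,∞)` is bounded above). -/
theorem maximizers_nonempty_compact (beta gams lams lamf lam mus muf hs hf eta : ℝ) (hbeta : 0 < beta) (hgams : 0 < gams) (hlams : 0 ≤ lams) (hlamf : 0 ≤ lamf) (hlam : 0 ≤ lam) :
    {r : ℝ | 0 ≤ r ∧ ∀ r' : ℝ, 0 ≤ r' → FF beta gams lams lamf lam mus muf hs hf eta r' ≤ FF beta gams lams lamf lam mus muf hs hf eta r}.Nonempty ∧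
    IsCompact {r : ℝ | 0 ≤ r ∧ ∀ r' : ℝ, 0 ≤ r' → FF beta gams lams lamf lam mus muf hs hf eta r' ≤ FF beta gams lams lamf lam mus muf hs hf eta r} ∧
    BddAbove ((fun r => FF beta gams lams lamf lam mus muf hs hf eta r) '' Set.Ici 0) :=
  maximizers_nonempty_compact_general beta gams lams lamf lam mus muf hs hf eta hbeta hgams
end

section
/- The variational functional F is strictly decreasing on the interval (1/4, ∞). Consequently every maximizer r_β of F over [0,∞) satisfies 0 ≤ r_β ≤ 1/4, and sup_{r ≥ 0} F(r) = sup_{r ∈ [0,1/4]} F(r). -/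
open Real Filter

/-
`f` is a positive constant plus positive multiples of `cosh (β g_{r,x})`, and
`g_{r,x} = √((x + λ_s − μ_s)² + γ_s² r)` grows in `r` at rate at most `γ_s / (2√r)`.
Since `cosh (b + d) < cosh b · e^d` for `d > 0` (as `sinh b < cosh b`), this gives
`β⁻¹ ln f(r₂) < β⁻¹ ln f(r₁) + γ_s (r₂ − r₁) / (2√r₁)` for `0 < r₁ < r₂`,
so `F(r₂) < F(r₁)` as soon as `√r₁ ≥ 1/2`: `F` is strictly decreasing on `[1/4, ∞)`.
-/

lemma Real.cosh_add_lt_cosh_mul_exp (x : ℝ) {d : ℝ} (hd : 0 < d) :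
    cosh (x + d) < cosh x * exp d := by
  rw [cosh_add, ← cosh_add_sinh d, mul_add, add_lt_add_iff_left]
  exact mul_lt_mul_of_pos_right (sinh_lt_cosh x) (sinh_pos_iff.mpr hd)

lemma Real.sqrt_le_sqrt_add_div {x y : ℝ} (hx : 0 < x) (hy : 0 ≤ y) :
    √y ≤ √x + (y - x) / (2 * √x) := by
  have htangent : √x + (y - x) / (2 * √x) = (x + y) / (2 * √x) := by
    field_simp
    rw [sq_sqrt hx.le]
    ring
  rw [htangent, le_div_iff₀ (by positivity)]
  nlinarith [sq_nonneg (√y - √x), sq_sqrt hx.le, sq_sqrt hy]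

section

variable {beta gams lams lamf lam mus muf hs hf eta r₁ r₂ : ℝ}

lemma gg_le_gg_add (x : ℝ) (hgams : 0 < gams) (hr₁ : 0 < r₁) (h : r₁ ≤ r₂) :
    gg gams lams mus r₂ x ≤ gg gams lams mus r₁ x + gams * (r₂ - r₁) / (2 * √r₁) := by
  have hsqrt : gams * √r₁ ≤ gg gams lams mus r₁ x := by
    rw [gg, show gams * √r₁ = √(gams ^ 2 * r₁) by rw [sqrt_mul (sq_nonneg _), sqrt_sq hgams.le]]
    exact sqrt_le_sqrt (le_add_of_nonneg_left (sq_nonneg _))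
  calc gg gams lams mus r₂ x
      ≤ gg gams lams mus r₁ x + gams ^ 2 * (r₂ - r₁) / (2 * gg gams lams mus r₁ x) := by
        have hconcave := sqrt_le_sqrt_add_div (x := (x + lams - mus) ^ 2 + gams ^ 2 * r₁)
          (y := (x + lams - mus) ^ 2 + gams ^ 2 * r₂)
          (add_pos_of_nonneg_of_pos (sq_nonneg _) (mul_pos (pow_pos hgams 2) hr₁))
          (add_nonneg (sq_nonneg _) (mul_nonneg (sq_nonneg _) (hr₁.le.trans h)))
        rwa [show (x + lams - mus) ^ 2 + gams ^ 2 * r₂ - ((x + lams - mus) ^ 2 + gams ^ 2 * r₁)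
          = gams ^ 2 * (r₂ - r₁) by ring] at hconcave
    _ ≤ gg gams lams mus r₁ x + gams ^ 2 * (r₂ - r₁) / (2 * (gams * √r₁)) := by
        gcongr
    _ = gg gams lams mus r₁ x + gams * (r₂ - r₁) / (2 * √r₁) := by
        field_simp

local notation "𝔣" => ff beta gams lams lamf lam mus muf hs hf eta
local notation "𝔉" => FF beta gams lams lamf lam mus muf hs hf eta

lemma ff_pos_s2 (r : ℝ) : 0 < 𝔣 r := by
  unfold ff
  positivity

lemma cosh_mul_gg_lt (x : ℝ) (hbeta : 0 < beta) (hgams : 0 < gams) (hr₁ : 0 < r₁)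
    (h : r₁ < r₂) :
    cosh (beta * gg gams lams mus r₂ x) <
      exp (beta * (gams * (r₂ - r₁) / (2 * √r₁))) * cosh (beta * gg gams lams mus r₁ x) := by
  have hrate : 0 < gams * (r₂ - r₁) / (2 * √r₁) :=
    div_pos (mul_pos hgams (sub_pos.mpr h)) (by positivity)
  have hg₁ : 0 ≤ beta * gg gams lams mus r₁ x := mul_nonneg hbeta.le (sqrt_nonneg _)
  have hg₂ : 0 ≤ beta * gg gams lams mus r₂ x := mul_nonneg hbeta.le (sqrt_nonneg _)
  have hmono : cosh (beta * gg gams lams mus r₂ x) ≤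
      cosh (beta * gg gams lams mus r₁ x + beta * (gams * (r₂ - r₁) / (2 * √r₁))) := by
    refine cosh_strictMonoOn.monotoneOn hg₂ (by positivity : (0 : ℝ) ≤ _) ?_
    rw [← mul_add]
    exact mul_le_mul_of_nonneg_left (gg_le_gg_add x hgams hr₁ h.le) hbeta.le
  rw [mul_comm (exp _)]
  exact hmono.trans_lt (cosh_add_lt_cosh_mul_exp _ (by positivity))

lemma ff_lt_exp_mul_ff (hbeta : 0 < beta) (hgams : 0 < gams) (hr₁ : 0 < r₁) (h : r₁ < r₂) :
    𝔣 r₂ < exp (beta * (gams * (r₂ - r₁) / (2 * √r₁))) * 𝔣 r₁ := by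
  set E := exp (beta * (gams * (r₂ - r₁) / (2 * √r₁)))
  have hE : 1 ≤ E := one_le_exp (by have := sub_pos.mpr h; positivity)
  have hconst : ∀ K, 0 ≤ K → K ≤ E * K := fun K hK => le_mul_of_one_le_left hK hE
  have hcosh : ∀ K, 0 < K → ∀ x, K * cosh (beta * gg gams lams mus r₂ x) <
      E * (K * cosh (beta * gg gams lams mus r₁ x)) := fun K hK x => by
    rw [mul_left_comm]
    exact mul_lt_mul_of_pos_left (cosh_mul_gg_lt x hbeta hgams hr₁ h) hK
  unfold ff
  linarith [hconst ((exp (-(beta * muf)) + exp (-(beta * (4 * lam + 2 * lamf - muf)))) *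
      cosh (beta * hs)) (by positivity),
    hconst (exp (-(beta * (2 * lam - hs))) * cosh (beta * (eta + hf))) (by positivity),
    hconst (exp (-(beta * (2 * lam + hs))) * cosh (beta * (eta - hf))) (by positivity),
    hcosh (exp (-(beta * (lams + muf)))) (by positivity) 0,
    hcosh (exp (-(beta * (4 * lam + lams + 2 * lamf - muf)))) (by positivity) (4 * lam),
    hcosh (2 * exp (-(beta * (2 * lam + lams))) * cosh (beta * hf)) (by positivity) (2 * lam)]

lemma FF_sub_FF_lt (hbeta : 0 < beta) (hgams : 0 < gams) (hr₁ : 0 < r₁) (h : r₁ < r₂) :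
    𝔉 r₂ - 𝔉 r₁ < gams * (r₂ - r₁) / (2 * √r₁) - gams * (r₂ - r₁) := by
  have hlog : log (𝔣 r₂) < log (exp (beta * (gams * (r₂ - r₁) / (2 * √r₁))) * 𝔣 r₁) :=
    log_lt_log (ff_pos_s2 r₂) (ff_lt_exp_mul_ff hbeta hgams hr₁ h)
  rw [log_mul (exp_ne_zero _) (ff_pos_s2 r₁).ne', log_exp] at hlog
  have hscaled := mul_lt_mul_of_pos_left hlog (inv_pos.mpr hbeta)
  rw [mul_add, inv_mul_cancel_left₀ hbeta.ne'] at hscaled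
  unfold FF
  linarith

lemma FF_strictAntiOn_Ici (hbeta : 0 < beta) (hgams : 0 < gams) :
    StrictAntiOn 𝔉 (Set.Ici (1 / 4)) := by
  intro r₁ hr₁ r₂ _ h
  have hpos : (0 : ℝ) < r₁ := lt_of_lt_of_le (by norm_num) hr₁
  have hsqrt : 1 / 2 ≤ √r₁ := (le_sqrt' (by norm_num)).mpr (by norm_num; exact hr₁)
  have hrate : gams * (r₂ - r₁) / (2 * √r₁) ≤ gams * (r₂ - r₁) :=
    div_le_self (mul_nonneg hgams.le (sub_nonneg.mpr h.le)) (by linarith)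
  have hdecay : 𝔉 r₂ - 𝔉 r₁ < _ := FF_sub_FF_lt hbeta hgams hpos h
  linarith

end

theorem F_strictAnti_and_maximizer_le_quarter_general (beta gams lams lamf lam mus muf hs hf eta : ℝ) (hbeta : 0 < beta) (hgams : 0 < gams) :
    StrictAntiOn (fun r => FF beta gams lams lamf lam mus muf hs hf eta r) (Set.Ioi (1 / 4 : ℝ)) ∧
    (∀ rb : ℝ, 0 ≤ rb → (∀ r' : ℝ, 0 ≤ r' → FF beta gams lams lamf lam mus muf hs hf eta r' ≤ FF beta gams lams lamf lam mus muf hs hf eta rb) →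
      rb ≤ 1 / 4) ∧
    sSup ((fun r => FF beta gams lams lamf lam mus muf hs hf eta r) '' Set.Ici 0) =
      sSup ((fun r => FF beta gams lams lamf lam mus muf hs hf eta r) '' Set.Icc 0 (1 / 4)) := by
  have hanti : StrictAntiOn (FF beta gams lams lamf lam mus muf hs hf eta) (Set.Ici (1 / 4)) :=
    FF_strictAntiOn_Ici hbeta hgams
  have hquarter : ∀ r, 1 / 4 < r →
      FF beta gams lams lamf lam mus muf hs hf eta r < FF beta gams lams lamf lam mus muf hs hf eta (1 / 4) :=
    fun r hr => hanti Set.self_mem_Ici (Set.mem_Ici.mpr hr.le) hr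
  refine ⟨hanti.mono Set.Ioi_subset_Ici_self, fun rb _ hmax => ?_, ?_⟩
  · by_contra! hrb
    exact (hquarter rb hrb).not_ge (hmax _ (by norm_num))
  · apply csSup_eq_csSup_of_forall_exists_le
    · rintro _ ⟨r, hr, rfl⟩
      rcases le_or_gt r (1 / 4) with hle | hgt
      · exact ⟨_, ⟨r, ⟨hr, hle⟩, rfl⟩, le_rfl⟩
      · exact ⟨_, ⟨1 / 4, ⟨by norm_num, le_rfl⟩, rfl⟩, (hquarter r hgt).le⟩
    · rintro _ ⟨r, hr, rfl⟩
      exact ⟨_, ⟨r, hr.1, rfl⟩, le_rfl⟩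

/-- `F` is strictly decreasing on `(1/4, ∞)`; hence every maximizer
of `F` over `[0,∞)` lies in `[0, 1/4]`, and the sup over `[0,∞)` equals the sup
over `[0, 1/4]`. -/
theorem F_strictAnti_and_maximizer_le_quarter (beta gams lams lamf lam mus muf hs hf eta : ℝ) (hbeta : 0 < beta) (hgams : 0 < gams) (hlams : 0 ≤ lams) (hlamf : 0 ≤ lamf) (hlam : 0 ≤ lam) :
    StrictAntiOn (fun r => FF beta gams lams lamf lam mus muf hs hf eta r) (Set.Ioi (1 / 4 : ℝ)) ∧
    (∀ rb : ℝ, 0 ≤ rb → (∀ r' : ℝ, 0 ≤ r' → FF beta gams lams lamf lam mus muf hs hf eta r' ≤ FF beta gams lams lamf lam mus muf hs hf eta rb) →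
      rb ≤ 1 / 4) ∧
    sSup ((fun r => FF beta gams lams lamf lam mus muf hs hf eta r) '' Set.Ici 0) =
      sSup ((fun r => FF beta gams lams lamf lam mus muf hs hf eta r) '' Set.Icc 0 (1 / 4)) :=
  F_strictAnti_and_maximizer_le_quarter_general beta gams lams lamf lam mus muf hs hf eta hbeta
    hgams
end

section
/- For every r > 0 one has 0 ≤ G_0(r) + G_1(r) + G_2(r) ≤ min(β, 1/(γ_s·sqrt(r))). -/
/-!
Each `G_i` equals `w_i · (sinh (β g_i) / g_i) / f`, where `w_i cosh (β g_i)` is a summand of `f`.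
By the mean value theorem `sinh y ≤ y cosh y` for `y ≥ 0`, and `sinh y ≤ cosh y`, so
`sinh (β g) / g ≤ min β (1 / g) · cosh (β g)`; moreover `g_i ≥ γ_s √r`. Hence
`G_0 + G_1 + G_2` is at most `min β (1 / (γ_s √r))` times the share of those three summands
in `f`, which is at most one.
-/

open Real Filter

/-- `G_0`. -/
noncomputable def G0 (beta gams lams lamf lam mus muf hs hf eta r : ℝ) : ℝ :=
  Real.sinh (beta * gg gams lams mus r 0) /
    (ff beta gams lams lamf lam mus muf hs hf eta r * Real.exp (beta * (lams + muf))
      * gg gams lams mus r 0)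

/-- `G_1`. -/
noncomputable def G1 (beta gams lams lamf lam mus muf hs hf eta r : ℝ) : ℝ :=
  2 * Real.cosh (beta * hf) * Real.sinh (beta * gg gams lams mus r (2 * lam)) /
    (ff beta gams lams lamf lam mus muf hs hf eta r * Real.exp (beta * (2 * lam + lams))
      * gg gams lams mus r (2 * lam))

/-- `G_2`. -/
noncomputable def G2 (beta gams lams lamf lam mus muf hs hf eta r : ℝ) : ℝ :=
  Real.sinh (beta * gg gams lams mus r (4 * lam)) /
    (ff beta gams lams lamf lam mus muf hs hf eta r
      * Real.exp (beta * (4 * lam + lams + 2 * lamf - muf))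
      * gg gams lams mus r (4 * lam))


namespace Real

theorem sinh_le_mul_cosh {x : ℝ} (hx : 0 ≤ x) : sinh x ≤ x * cosh x := by
  rcases hx.eq_or_lt with rfl | hx
  · simp
  obtain ⟨ξ, ⟨hξ0, hξx⟩, hslope⟩ :=
    exists_hasDerivAt_eq_slope sinh cosh hx continuous_sinh.continuousOn
      fun t _ => hasDerivAt_sinh t
  rw [sinh_zero, sub_zero, sub_zero, eq_div_iff hx.ne'] at hslope
  have hcosh : cosh ξ ≤ cosh x := by
    rw [cosh_le_cosh, abs_of_pos hξ0, abs_of_pos hx]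
    exact hξx.le
  nlinarith

theorem sinh_mul_div_le_min_mul_cosh {β c g : ℝ} (hβ : 0 ≤ β) (hc : 0 < c) (hcg : c ≤ g) :
    sinh (β * g) / g ≤ min β (1 / c) * cosh (β * g) := by
  have hg : 0 < g := hc.trans_le hcg
  rw [min_mul_of_nonneg _ _ (cosh_pos _).le, le_min_iff, div_le_iff₀ hg, div_le_iff₀ hg]
  constructor
  · linarith [sinh_le_mul_cosh (mul_nonneg hβ hg.le)]
  · calc sinh (β * g) ≤ cosh (β * g) := (sinh_lt_cosh _).le
      _ ≤ cosh (β * g) * (g / c) :=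
          le_mul_of_one_le_right (cosh_pos _).le ((one_le_div hc).mpr hcg)
      _ = 1 / c * cosh (β * g) * g := by ring

end Real

theorem mul_sqrt_le_gg (gams lams mus r x : ℝ) : gams * √r ≤ gg gams lams mus r x :=
  calc gams * √r ≤ |gams| * √r := mul_le_mul_of_nonneg_right (le_abs_self _) (sqrt_nonneg _)
    _ = √(gams ^ 2 * r) := by rw [sqrt_mul (sq_nonneg _), sqrt_sq_eq_abs]
    _ ≤ gg gams lams mus r x := sqrt_le_sqrt (le_add_of_nonneg_left (sq_nonneg _))

section

variable (beta gams lams lamf lam mus muf hs hf eta r : ℝ)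

theorem cosh_terms_le_ff :
    exp (-(beta * (lams + muf))) * cosh (beta * gg gams lams mus r 0)
      + 2 * exp (-(beta * (2 * lam + lams))) * cosh (beta * hf)
        * cosh (beta * gg gams lams mus r (2 * lam))
      + exp (-(beta * (4 * lam + lams + 2 * lamf - muf)))
        * cosh (beta * gg gams lams mus r (4 * lam))
      ≤ ff beta gams lams lamf lam mus muf hs hf eta r := by
  have h₁ : 0 < (exp (-(beta * muf)) + exp (-(beta * (4 * lam + 2 * lamf - muf))))
      * cosh (beta * hs) := by
    positivity
  have h₂ : 0 < exp (-(beta * (2 * lam - hs))) * cosh (beta * (eta + hf)) := by positivity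
  have h₃ : 0 < exp (-(beta * (2 * lam + hs))) * cosh (beta * (eta - hf)) := by positivity
  rw [ff]
  linarith

theorem G0_eq : G0 beta gams lams lamf lam mus muf hs hf eta r =
    exp (-(beta * (lams + muf)))
      * (sinh (beta * gg gams lams mus r 0) / gg gams lams mus r 0)
      / ff beta gams lams lamf lam mus muf hs hf eta r := by
  rw [G0, exp_neg]
  ring

theorem G1_eq : G1 beta gams lams lamf lam mus muf hs hf eta r =
    2 * exp (-(beta * (2 * lam + lams))) * cosh (beta * hf)
      * (sinh (beta * gg gams lams mus r (2 * lam)) / gg gams lams mus r (2 * lam))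
      / ff beta gams lams lamf lam mus muf hs hf eta r := by
  rw [G1, exp_neg]
  ring

theorem G2_eq : G2 beta gams lams lamf lam mus muf hs hf eta r =
    exp (-(beta * (4 * lam + lams + 2 * lamf - muf)))
      * (sinh (beta * gg gams lams mus r (4 * lam)) / gg gams lams mus r (4 * lam))
      / ff beta gams lams lamf lam mus muf hs hf eta r := by
  rw [G2, exp_neg]
  ring

end

theorem G_sum_bounds_general (beta gams lams lamf lam mus muf hs hf eta : ℝ) (hbeta : 0 < beta) (hgams : 0 < gams) :
    ∀ r : ℝ, 0 < r →
      0 ≤ G0 beta gams lams lamf lam mus muf hs hf eta r + G1 beta gams lams lamf lam mus muf hs hf eta r + G2 beta gams lams lamf lam mus muf hs hf eta r ∧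
      G0 beta gams lams lamf lam mus muf hs hf eta r + G1 beta gams lams lamf lam mus muf hs hf eta r + G2 beta gams lams lamf lam mus muf hs hf eta r ≤ min beta (1 / (gams * Real.sqrt r)) := by
  intro r hr
  set g := gg gams lams mus r
  set m := min beta (1 / (gams * √r))
  have hc : 0 < gams * √r := by positivity
  have hq : ∀ x,
      0 ≤ sinh (beta * g x) / g x ∧ sinh (beta * g x) / g x ≤ m * cosh (beta * g x) :=
    fun x =>
      have hg : 0 < g x := hc.trans_le (mul_sqrt_le_gg gams lams mus r x)
      ⟨div_nonneg (sinh_nonneg_iff.mpr (by positivity)) hg.le,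
        sinh_mul_div_le_min_mul_cosh hbeta.le hc (mul_sqrt_le_gg gams lams mus r x)⟩
  have hff := cosh_terms_le_ff beta gams lams lamf lam mus muf hs hf eta r
  rw [G0_eq, G1_eq, G2_eq, ← add_div, ← add_div]
  set w₀ := exp (-(beta * (lams + muf)))
  set w₁ := 2 * exp (-(beta * (2 * lam + lams))) * cosh (beta * hf)
  set w₂ := exp (-(beta * (4 * lam + lams + 2 * lamf - muf)))
  have hfpos : 0 < ff beta gams lams lamf lam mus muf hs hf eta r :=
    lt_of_lt_of_le (by positivity) hff
  obtain ⟨hq₀, hq₀'⟩ := hq 0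
  obtain ⟨hq₁, hq₁'⟩ := hq (2 * lam)
  obtain ⟨hq₂, hq₂'⟩ := hq (4 * lam)
  refine ⟨by positivity, (div_le_iff₀ hfpos).mpr ?_⟩
  calc _ ≤ w₀ * (m * cosh (beta * g 0)) + w₁ * (m * cosh (beta * g (2 * lam)))
        + w₂ * (m * cosh (beta * g (4 * lam))) := by gcongr
    _ = m * (w₀ * cosh (beta * g 0) + w₁ * cosh (beta * g (2 * lam))
        + w₂ * cosh (beta * g (4 * lam))) := by ring
    _ ≤ m * ff beta gams lams lamf lam mus muf hs hf eta r :=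
        mul_le_mul_of_nonneg_left hff (lt_min hbeta (one_div_pos.mpr hc)).le

/-- for every `r > 0`,
`0 ≤ G_0(r) + G_1(r) + G_2(r) ≤ min(β, 1/(γ_s √r))`. -/
theorem G_sum_bounds (beta gams lams lamf lam mus muf hs hf eta : ℝ) (hbeta : 0 < beta) (hgams : 0 < gams) (hlams : 0 ≤ lams) (hlamf : 0 ≤ lamf) (hlam : 0 ≤ lam) :
    ∀ r : ℝ, 0 < r →
      0 ≤ G0 beta gams lams lamf lam mus muf hs hf eta r + G1 beta gams lams lamf lam mus muf hs hf eta r + G2 beta gams lams lamf lam mus muf hs hf eta r ∧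
      G0 beta gams lams lamf lam mus muf hs hf eta r + G1 beta gams lams lamf lam mus muf hs hf eta r + G2 beta gams lams lamf lam mus muf hs hf eta r ≤ min beta (1 / (gams * Real.sqrt r)) :=
  G_sum_bounds_general beta gams lams lamf lam mus muf hs hf eta hbeta hgams
end

section
/- For every r ≥ 0 the non-superconducting-band density expression d^{(f)}(r) := 1 + f(r)^{−1}·[ (exp(−β·(4λ + 2λ_f − μ_f)) − exp(−β·μ_f))·cosh(β·h_s) + exp(−β·(λ_s + 4λ + 2λ_f − μ_f))·cosh(β·g_{r,4λ}) − exp(−β·(λ_s + μ_f))·cosh(β·g_{r,0}) ] satisfies 0 ≤ d^{(f)}(r) ≤ 2. -/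
/-!
`f` splits into the nonnegative Boltzmann weights `w₀, w₁, w₂` of the states with zero, one
and two electrons in the `f`-band, and the bracket in `d^{(f)}` is `w₂ - w₀`. Hence
`d^{(f)} = (w₁ + 2 w₂) / (w₀ + w₁ + w₂)` is a mean of occupation numbers in `{0, 1, 2}`.
-/

open Real Filter

theorem one_add_inv_mul_sub_mem_Icc {w₀ w₁ w₂ : ℝ} (h₀ : 0 ≤ w₀) (h₁ : 0 ≤ w₁) (h₂ : 0 ≤ w₂) :
    1 + (w₀ + w₁ + w₂)⁻¹ * (w₂ - w₀) ∈ Set.Icc 0 2 := by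
  rcases (by positivity : 0 ≤ w₀ + w₁ + w₂).eq_or_lt with h | h
  · simp [← h]
  · have hmean : 1 + (w₀ + w₁ + w₂)⁻¹ * (w₂ - w₀) = (w₁ + 2 * w₂) / (w₀ + w₁ + w₂) := by
      field_simp
      ring
    rw [hmean]
    exact ⟨by positivity, by rw [div_le_iff₀ h]; linarith⟩

section Weights

variable (beta gams lams lamf lam mus muf hs hf eta r : ℝ)

noncomputable def emptyWeight : ℝ :=
  exp (-(beta * muf)) * cosh (beta * hs)
    + exp (-(beta * (lams + muf))) * cosh (beta * gg gams lams mus r 0)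

noncomputable def singleWeight : ℝ :=
  exp (-(beta * (2 * lam - hs))) * cosh (beta * (eta + hf))
    + exp (-(beta * (2 * lam + hs))) * cosh (beta * (eta - hf))
    + 2 * exp (-(beta * (2 * lam + lams))) * cosh (beta * hf)
      * cosh (beta * gg gams lams mus r (2 * lam))

noncomputable def doubleWeight : ℝ :=
  exp (-(beta * (4 * lam + 2 * lamf - muf))) * cosh (beta * hs)
    + exp (-(beta * (lams + 4 * lam + 2 * lamf - muf))) * cosh (beta * gg gams lams mus r (4 * lam))

theorem emptyWeight_nonneg : 0 ≤ emptyWeight beta gams lams mus muf hs r := by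
  unfold emptyWeight
  positivity

theorem singleWeight_nonneg : 0 ≤ singleWeight beta gams lams lam mus hs hf eta r := by
  unfold singleWeight
  positivity

theorem doubleWeight_nonneg : 0 ≤ doubleWeight beta gams lams lamf lam mus muf hs r := by
  unfold doubleWeight
  positivity

theorem ff_eq_add_weights :
    ff beta gams lams lamf lam mus muf hs hf eta r =
      emptyWeight beta gams lams mus muf hs r + singleWeight beta gams lams lam mus hs hf eta r
        + doubleWeight beta gams lams lamf lam mus muf hs r := by
  unfold ff emptyWeight singleWeight doubleWeight
  ring_nf

theorem doubleWeight_sub_emptyWeight :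
    doubleWeight beta gams lams lamf lam mus muf hs r - emptyWeight beta gams lams mus muf hs r =
      (exp (-(beta * (4 * lam + 2 * lamf - muf))) - exp (-(beta * muf))) * cosh (beta * hs)
        + exp (-(beta * (lams + 4 * lam + 2 * lamf - muf))) * cosh (beta * gg gams lams mus r (4 * lam))
        - exp (-(beta * (lams + muf))) * cosh (beta * gg gams lams mus r 0) := by
  unfold doubleWeight emptyWeight
  ring

end Weights

theorem density_f_bounds_general (beta gams lams lamf lam mus muf hs hf eta : ℝ) :
    ∀ r : ℝ, 0 ≤ r →
      0 ≤ 1 + (ff beta gams lams lamf lam mus muf hs hf eta r)⁻¹ *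
        ((Real.exp (-(beta * (4 * lam + 2 * lamf - muf))) - Real.exp (-(beta * muf)))
            * Real.cosh (beta * hs)
          + Real.exp (-(beta * (lams + 4 * lam + 2 * lamf - muf)))
            * Real.cosh (beta * gg gams lams mus r (4 * lam))
          - Real.exp (-(beta * (lams + muf))) * Real.cosh (beta * gg gams lams mus r 0)) ∧
      (1 + (ff beta gams lams lamf lam mus muf hs hf eta r)⁻¹ *
        ((Real.exp (-(beta * (4 * lam + 2 * lamf - muf))) - Real.exp (-(beta * muf)))
            * Real.cosh (beta * hs)
          + Real.exp (-(beta * (lams + 4 * lam + 2 * lamf - muf)))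
            * Real.cosh (beta * gg gams lams mus r (4 * lam))
          - Real.exp (-(beta * (lams + muf))) * Real.cosh (beta * gg gams lams mus r 0))) ≤ 2 := by
  intro r _
  rw [← doubleWeight_sub_emptyWeight, ff_eq_add_weights]
  exact one_add_inv_mul_sub_mem_Icc (emptyWeight_nonneg ..) (singleWeight_nonneg ..)
    (doubleWeight_nonneg ..)

/-- for every `r ≥ 0` the non-superconducting-band density
expression lies in `[0, 2]`. -/
theorem density_f_bounds (beta gams lams lamf lam mus muf hs hf eta : ℝ) (hbeta : 0 < beta) (hgams : 0 < gams) (hlams : 0 ≤ lams) (hlamf : 0 ≤ lamf) (hlam : 0 ≤ lam) :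
    ∀ r : ℝ, 0 ≤ r →
      0 ≤ 1 + (ff beta gams lams lamf lam mus muf hs hf eta r)⁻¹ *
        ((Real.exp (-(beta * (4 * lam + 2 * lamf - muf))) - Real.exp (-(beta * muf)))
            * Real.cosh (beta * hs)
          + Real.exp (-(beta * (lams + 4 * lam + 2 * lamf - muf)))
            * Real.cosh (beta * gg gams lams mus r (4 * lam))
          - Real.exp (-(beta * (lams + muf))) * Real.cosh (beta * gg gams lams mus r 0)) ∧
      (1 + (ff beta gams lams lamf lam mus muf hs hf eta r)⁻¹ *
        ((Real.exp (-(beta * (4 * lam + 2 * lamf - muf))) - Real.exp (-(beta * muf)))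
            * Real.cosh (beta * hs)
          + Real.exp (-(beta * (lams + 4 * lam + 2 * lamf - muf)))
            * Real.cosh (beta * gg gams lams mus r (4 * lam))
          - Real.exp (-(beta * (lams + muf))) * Real.cosh (beta * gg gams lams mus r 0))) ≤ 2 :=
  density_f_bounds_general beta gams lams lamf lam mus muf hs hf eta
end

section
/- For every r ≥ 0 the inter-band magnetization expression M(r) := exp(−2βλ)·f(r)^{−1}·[ exp(−β·h_s)·sinh(β·(η − h_f)) + exp(β·h_s)·sinh(β·(η + h_f)) ] satisfies −1 ≤ M(r) ≤ 1. -/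
open Real Filter

/-!
By `|sinh| ≤ cosh`, the magnetization numerator is bounded in absolute value by
`e^{-βh_s} cosh (β(η - h_f)) + e^{βh_s} cosh (β(η + h_f))`. Multiplied by `e^{-2βλ}`, these are
exactly the second and third terms of `f`, and every other term of `f` is positive; so
`e^{-2βλ} |numerator| < f`.
-/

lemma Real.abs_sinh_le_cosh (x : ℝ) : |sinh x| ≤ cosh x := by
  simpa only [abs_sinh, cosh_abs] using (sinh_lt_cosh |x|).le

lemma abs_exp_mul_sinh_add_exp_mul_sinh_le (a b x y : ℝ) :
    |exp a * sinh x + exp b * sinh y| ≤ exp a * cosh x + exp b * cosh y :=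
  (abs_add_le _ _).trans <| by
    rw [abs_mul, abs_mul, abs_exp, abs_exp]
    gcongr <;> exact abs_sinh_le_cosh _

lemma abs_mul_inv_mul_le_one {c F S : ℝ} (hF : 0 < F) (hc : 0 ≤ c) (h : c * |S| ≤ F) :
    |c * F⁻¹ * S| ≤ 1 := by
  rw [mul_comm c, mul_assoc, abs_mul, abs_inv, abs_of_pos hF, abs_mul, abs_of_nonneg hc,
    inv_mul_le_iff₀ hF, mul_one]
  exact h

lemma exp_mul_magnetization_cosh_lt_ff (beta gams lams lamf lam mus muf hs hf eta r : ℝ) :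
    exp (-(2 * beta * lam)) * (exp (-(beta * hs)) * cosh (beta * (eta - hf))
        + exp (beta * hs) * cosh (beta * (eta + hf)))
      < ff beta gams lams lamf lam mus muf hs hf eta r := by
  have hplus : exp (-(2 * beta * lam)) * exp (-(beta * hs)) = exp (-(beta * (2 * lam + hs))) := by
    rw [← exp_add]; ring_nf
  have hminus : exp (-(2 * beta * lam)) * exp (beta * hs) = exp (-(beta * (2 * lam - hs))) := by
    rw [← exp_add]; ring_nf
  have hrest : 0 < (exp (-(beta * muf)) + exp (-(beta * (4 * lam + 2 * lamf - muf))))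
        * cosh (beta * hs)
      + exp (-(beta * (lams + muf))) * cosh (beta * gg gams lams mus r 0)
      + exp (-(beta * (4 * lam + lams + 2 * lamf - muf))) * cosh (beta * gg gams lams mus r (4 * lam))
      + 2 * exp (-(beta * (2 * lam + lams))) * cosh (beta * hf)
        * cosh (beta * gg gams lams mus r (2 * lam)) := by
    positivity
  rw [mul_add, ← mul_assoc, ← mul_assoc, hplus, hminus, ff]
  linarith

theorem interband_magnetization_bounds_general (beta gams lams lamf lam mus muf hs hf eta : ℝ) :
    ∀ r : ℝ, 0 ≤ r →
      -1 ≤ Real.exp (-(2 * beta * lam)) * (ff beta gams lams lamf lam mus muf hs hf eta r)⁻¹ *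
        (Real.exp (-(beta * hs)) * Real.sinh (beta * (eta - hf))
          + Real.exp (beta * hs) * Real.sinh (beta * (eta + hf))) ∧
      (Real.exp (-(2 * beta * lam)) * (ff beta gams lams lamf lam mus muf hs hf eta r)⁻¹ *
        (Real.exp (-(beta * hs)) * Real.sinh (beta * (eta - hf))
          + Real.exp (beta * hs) * Real.sinh (beta * (eta + hf)))) ≤ 1 := by
  intro r _
  have hdom := exp_mul_magnetization_cosh_lt_ff beta gams lams lamf lam mus muf hs hf eta r
  have hff : 0 < ff beta gams lams lamf lam mus muf hs hf eta r :=
    lt_of_le_of_lt (by positivity) hdom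
  refine abs_le.mp (abs_mul_inv_mul_le_one hff (exp_pos _).le ?_)
  calc exp (-(2 * beta * lam)) * |exp (-(beta * hs)) * sinh (beta * (eta - hf))
        + exp (beta * hs) * sinh (beta * (eta + hf))|
      ≤ exp (-(2 * beta * lam)) * (exp (-(beta * hs)) * cosh (beta * (eta - hf))
        + exp (beta * hs) * cosh (beta * (eta + hf))) := by
        gcongr; exact abs_exp_mul_sinh_add_exp_mul_sinh_le _ _ _ _
    _ ≤ ff beta gams lams lamf lam mus muf hs hf eta r := hdom.le

/-- for every `r ≥ 0` the inter-band magnetization expression lies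
in `[−1, 1]`. -/
theorem interband_magnetization_bounds (beta gams lams lamf lam mus muf hs hf eta : ℝ) (hbeta : 0 < beta) (hgams : 0 < gams) (hlams : 0 ≤ lams) (hlamf : 0 ≤ lamf) (hlam : 0 ≤ lam) :
    ∀ r : ℝ, 0 ≤ r →
      -1 ≤ Real.exp (-(2 * beta * lam)) * (ff beta gams lams lamf lam mus muf hs hf eta r)⁻¹ *
        (Real.exp (-(beta * hs)) * Real.sinh (beta * (eta - hf))
          + Real.exp (beta * hs) * Real.sinh (beta * (eta + hf))) ∧
      (Real.exp (-(2 * beta * lam)) * (ff beta gams lams lamf lam mus muf hs hf eta r)⁻¹ *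
        (Real.exp (-(beta * hs)) * Real.sinh (beta * (eta - hf))
          + Real.exp (beta * hs) * Real.sinh (beta * (eta + hf)))) ≤ 1 :=
  interband_magnetization_bounds_general beta gams lams lamf lam mus muf hs hf eta
end
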